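/- arXiv:2505.14945 — 5 statements merged into one kernel-verified Lean document; each statement's English description precedes it below -/
import Mathlib

section
/- Let w* ∈ ℝ^F satisfy ∇L(w*; z) = 0, suppose the post-removal Hessian H_{w*}(z̃) is invertible, and define the Newton update w̃ = w* + H_{w*}(z̃)^{-1} Δ. If the map w ↦ ∇L(w; z̃) is continuously differentiable with derivative H_w(z̃), then ‖∇L(w̃; z̃)‖ ≤ ( sup_{η ∈ [0,1]} ‖H_{w_η}(z̃) − H_{w*}(z̃)‖_op ) · ‖H_{w*}(z̃)^{-1} Δ‖, where w_η = w* + η · H_{w*}(z̃)^{-1} Δ and ‖·‖_op is the operator norm. -/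
open scoped BigOperators InnerProductSpace

/-- bound on the post-removal gradient at the Newton update,
via the supremum of the Hessian variation along the segment. -/
theorem newton_update_gradient_bound
    (F m : ℕ) (hF : 0 < F) (hm : 0 < m) (lam : ℝ) (hlam : 0 < lam)
    (ℓ dℓ d2ℓ : ℝ → ℝ → ℝ)
    (hd1 : ∀ a y : ℝ, HasDerivAt (fun t => ℓ t y) (dℓ a y) a)
    (hd2 : ∀ a y : ℝ, HasDerivAt (fun t => dℓ t y) (d2ℓ a y) a)
    (z ztil : Fin m → EuclideanSpace ℝ (Fin F)) (y : Fin m → ℝ)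
    (wstar : EuclideanSpace ℝ (Fin F))
    -- gradient of the post-removal risk
    (G : EuclideanSpace ℝ (Fin F) → EuclideanSpace ℝ (Fin F))
    (hG : G = fun w => ∑ i, dℓ ⟪ztil i, w⟫_ℝ (y i) • ztil i + (lam * m) • w)
    -- the post-removal Hessian map
    (H : EuclideanSpace ℝ (Fin F) →
      EuclideanSpace ℝ (Fin F) →L[ℝ] EuclideanSpace ℝ (Fin F))
    (hH : H = fun w => ∑ i, d2ℓ ⟪ztil i, w⟫_ℝ (y i) •
        ((innerSL ℝ (ztil i)).smulRight (ztil i)) +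
        (lam * m) • ContinuousLinearMap.id ℝ (EuclideanSpace ℝ (Fin F)))
    -- `w ↦ ∇L(w; z̃)` is continuously differentiable with derivative `H`
    (hGderiv : ∀ w, HasFDerivAt G (H w) w) (hHcont : Continuous H)
    -- `w*` is a stationary point of the original risk
    (hstat : ∑ i, dℓ ⟪z i, wstar⟫_ℝ (y i) • z i + (lam * m) • wstar = 0)
    -- the post-removal Hessian at `w*` is invertible, with inverse `Hinv`
    (Hinv : EuclideanSpace ℝ (Fin F) →L[ℝ] EuclideanSpace ℝ (Fin F))
    (hinv1 : ∀ x, Hinv (H wstar x) = x) (hinv2 : ∀ x, H wstar (Hinv x) = x)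
    (Δ : EuclideanSpace ℝ (Fin F))
    (hΔ : Δ = ∑ i, (dℓ ⟪z i, wstar⟫_ℝ (y i) • z i - dℓ ⟪ztil i, wstar⟫_ℝ (y i) • ztil i)) :
    ‖G (wstar + Hinv Δ)‖ ≤
      (⨆ η : Set.Icc (0 : ℝ) 1, ‖H (wstar + (η : ℝ) • Hinv Δ) - H wstar‖) * ‖Hinv Δ‖ := by
  set u := Hinv Δ with hu
  have hGws : G wstar = -Δ := by
    have h1 : G wstar + Δ = 0 := by
      rw [hG, hΔ]
      simp only [Finset.sum_sub_distrib]
      rw [← hstat]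
      abel
    have := eq_neg_of_add_eq_zero_left h1
    exact this
  set f : EuclideanSpace ℝ (Fin F) → EuclideanSpace ℝ (Fin F) :=
    fun w => G w - H wstar w with hf
  have hfderiv : ∀ w, HasFDerivAt f (H w - H wstar) w := fun w =>
    (hGderiv w).sub (H wstar).hasFDerivAt
  set s : Set (EuclideanSpace ℝ (Fin F)) := segment ℝ wstar (wstar + u) with hs
  have hsub : wstar + u - wstar = u := add_sub_cancel_left _ _
  set C : ℝ := ⨆ η : Set.Icc (0 : ℝ) 1, ‖H (wstar + (η : ℝ) • u) - H wstar‖ with hC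
  have hcont : Continuous fun η : Set.Icc (0 : ℝ) 1 =>
      ‖H (wstar + (η : ℝ) • u) - H wstar‖ :=
    ((hHcont.comp (continuous_const.add
      (continuous_subtype_val.smul continuous_const))).sub continuous_const).norm
  have hbdd : BddAbove (Set.range fun η : Set.Icc (0 : ℝ) 1 =>
      ‖H (wstar + (η : ℝ) • u) - H wstar‖) :=
    (isCompact_range hcont).bddAbove
  have hbound : ∀ x ∈ s, ‖H x - H wstar‖ ≤ C := by
    intro x hx
    rw [hs, segment_eq_image'] at hx
    obtain ⟨η, hη, rfl⟩ := hx
    rw [hsub]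
    exact le_ciSup hbdd (⟨η, hη⟩ : Set.Icc (0 : ℝ) 1)
  have key : ‖f (wstar + u) - f wstar‖ ≤ C * ‖(wstar + u) - wstar‖ := by
    refine (convex_segment _ _).norm_image_sub_le_of_norm_hasFDerivWithin_le
      (fun x _ => (hfderiv x).hasFDerivWithinAt) hbound
      (left_mem_segment _ _ _) (right_mem_segment _ _ _)
  have hfe : f (wstar + u) - f wstar = G (wstar + u) := by
    simp only [hf]
    have : H wstar (wstar + u) - H wstar wstar = Δ := by
      rw [← ContinuousLinearMap.map_sub, hsub, hu, hinv2]
    rw [hGws]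
    have h2 : G (wstar + u) - H wstar (wstar + u) - (-Δ - H wstar wstar)
        = G (wstar + u) - (H wstar (wstar + u) - H wstar wstar) + Δ := by abel
    rw [h2, this]
    abel
  rw [hfe, hsub] at key
  exact key
end

section
/- Suppose ℓ'' is γ₂-Lipschitz in its first argument, i.e. |ℓ''(a, y) − ℓ''(b, y)| ≤ γ₂ |a − b| for all a, b, y ∈ ℝ. Then for any w₁, w₂ ∈ ℝ^F and any vectors z̃_1,…,z̃_m ∈ ℝ^F, the operator norm of the Hessian difference satisfies ‖ Σ_{i=1}^m [ℓ''(⟨z̃_i, w₁⟩, y_i) − ℓ''(⟨z̃_i, w₂⟩, y_i)] · z̃_i z̃_iᵀ ‖_op ≤ γ₂ ‖w₁ − w₂‖ · Σ_{i=1}^m ‖z̃_i‖³. -/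
set_option synthInstance.maxHeartbeats 1000000
set_option maxHeartbeats 1000000


open scoped BigOperators InnerProductSpace

/-- operator-norm bound on the Hessian difference under a
`γ₂`-Lipschitz second derivative of the loss. -/
theorem hessian_difference_opNorm_bound
    (F m : ℕ) (hF : 0 < F) (hm : 0 < m) (γ₂ : ℝ)
    (d2ℓ : ℝ → ℝ → ℝ)
    (hLip : ∀ a b y : ℝ, |d2ℓ a y - d2ℓ b y| ≤ γ₂ * |a - b|)
    (ztil : Fin m → EuclideanSpace ℝ (Fin F)) (y : Fin m → ℝ)
    (w₁ w₂ : EuclideanSpace ℝ (Fin F)) :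
    ‖∑ i, (d2ℓ ⟪ztil i, w₁⟫_ℝ (y i) - d2ℓ ⟪ztil i, w₂⟫_ℝ (y i)) •
        ((innerSL ℝ (ztil i)).smulRight (ztil i))‖ ≤
      γ₂ * ‖w₁ - w₂‖ * ∑ i, ‖ztil i‖ ^ 3 := by
  calc ‖∑ i, (d2ℓ ⟪ztil i, w₁⟫_ℝ (y i) - d2ℓ ⟪ztil i, w₂⟫_ℝ (y i)) •
        ((innerSL ℝ (ztil i)).smulRight (ztil i))‖
      ≤ ∑ i, ‖(d2ℓ ⟪ztil i, w₁⟫_ℝ (y i) - d2ℓ ⟪ztil i, w₂⟫_ℝ (y i)) •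
        ((innerSL ℝ (ztil i)).smulRight (ztil i))‖ := norm_sum_le _ _
    _ ≤ ∑ i, γ₂ * ‖w₁ - w₂‖ * ‖ztil i‖ ^ 3 := by
        apply Finset.sum_le_sum
        intro i _
        refine le_trans (ContinuousLinearMap.opNorm_smul_le _ _) ?_
        have hop : ‖(innerSL ℝ (ztil i)).smulRight (ztil i)‖ ≤ ‖ztil i‖ ^ 2 := by
          rw [ContinuousLinearMap.norm_smulRight_apply, innerSL_apply_norm, sq]
        have hcoef : ‖d2ℓ ⟪ztil i, w₁⟫_ℝ (y i) - d2ℓ ⟪ztil i, w₂⟫_ℝ (y i)‖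
            ≤ γ₂ * ‖w₁ - w₂‖ * ‖ztil i‖ := by
          calc ‖d2ℓ ⟪ztil i, w₁⟫_ℝ (y i) - d2ℓ ⟪ztil i, w₂⟫_ℝ (y i)‖
              ≤ γ₂ * |⟪ztil i, w₁⟫_ℝ - ⟪ztil i, w₂⟫_ℝ| := hLip _ _ _
            _ = γ₂ * |⟪ztil i, w₁ - w₂⟫_ℝ| := by rw [inner_sub_right]
            _ ≤ γ₂ * (‖ztil i‖ * ‖w₁ - w₂‖) := by
                have hγ : 0 ≤ γ₂ := by
                  have := hLip 1 0 0
                  simp at this; linarith [abs_nonneg (d2ℓ 1 0 - d2ℓ 0 0)]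
                exact mul_le_mul_of_nonneg_left (abs_real_inner_le_norm _ _) hγ
            _ = γ₂ * ‖w₁ - w₂‖ * ‖ztil i‖ := by ring
        have h2 : (0:ℝ) ≤ γ₂ * ‖w₁ - w₂‖ * ‖ztil i‖ := le_trans (norm_nonneg _) hcoef
        calc ‖d2ℓ ⟪ztil i, w₁⟫_ℝ (y i) - d2ℓ ⟪ztil i, w₂⟫_ℝ (y i)‖ *
              ‖(innerSL ℝ (ztil i)).smulRight (ztil i)‖
            ≤ (γ₂ * ‖w₁ - w₂‖ * ‖ztil i‖) * ‖ztil i‖ ^ 2 :=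
              mul_le_mul hcoef hop (norm_nonneg _) h2
          _ = γ₂ * ‖w₁ - w₂‖ * ‖ztil i‖ ^ 3 := by ring
    _ = γ₂ * ‖w₁ - w₂‖ * ∑ i, ‖ztil i‖ ^ 3 := by rw [Finset.mul_sum]
end

section
/- Suppose: (a) w* ∈ ℝ^F satisfies ∇L(w*; z) = 0; (b) ℓ(·, y) is convex in its first argument (so ℓ'' ≥ 0); (c) ℓ'' is γ₂-Lipschitz in its first argument, i.e. |ℓ''(a, y) − ℓ''(b, y)| ≤ γ₂ |a − b| for all a, b, y; (d) ‖z̃_i‖ ≤ 1 for all i; and (e) the map w ↦ ∇L(w; z̃) is continuously differentiable with derivative H_w(z̃). Then the Hessian H_{w*}(z̃) is invertible, and the Newton update w̃ = w* + H_{w*}(z̃)^{-1} Δ satisfies ‖∇L(w̃; z̃)‖ ≤ (γ₂ / (λ² m)) · ‖Δ‖². -/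
open scoped BigOperators InnerProductSpace

set_option maxHeartbeats 1000000

lemma aux_mono_deriv_nonneg {f : ℝ → ℝ} {f' a : ℝ} (hm : Monotone f)
    (hd : HasDerivAt f f' a) : 0 ≤ f' := by
  have h := hasDerivAt_iff_tendsto_slope.mp hd
  have h2 : Filter.Tendsto (slope f a) (nhdsWithin a (Set.Ioi a)) (nhds f') :=
    h.mono_left (nhdsWithin_mono a (fun x hx => ne_of_gt hx))
  refine ge_of_tendsto h2 ?_
  filter_upwards [self_mem_nhdsWithin] with x hx
  have hax : a < x := hx
  rw [slope_def_field]
  exact div_nonneg (sub_nonneg.2 (hm hax.le)) (sub_nonneg.2 hax.le)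

lemma aux_H_lip (F m : ℕ) (lam γ₂ : ℝ) (hγ₂ : 0 < γ₂) (d2ℓ : ℝ → ℝ → ℝ)
    (hLip : ∀ a b yv : ℝ, |d2ℓ a yv - d2ℓ b yv| ≤ γ₂ * |a - b|)
    (ztil : Fin m → EuclideanSpace ℝ (Fin F)) (y : Fin m → ℝ)
    (hznorm : ∀ i, ‖ztil i‖ ≤ 1)
    (H : EuclideanSpace ℝ (Fin F) →
      EuclideanSpace ℝ (Fin F) →L[ℝ] EuclideanSpace ℝ (Fin F))
    (hH : ∀ w x, H w x = ∑ i, d2ℓ ⟪ztil i, w⟫_ℝ (y i) • (⟪ztil i, x⟫_ℝ • ztil i) + (lam*(m:ℝ)) • x)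
    (u v x : EuclideanSpace ℝ (Fin F)) :
    ‖H u x - H v x‖ ≤ γ₂ * m * ‖u - v‖ * ‖x‖ := by
  have hdiff : H u x - H v x =
      ∑ i, (d2ℓ ⟪ztil i, u⟫_ℝ (y i) - d2ℓ ⟪ztil i, v⟫_ℝ (y i)) • (⟪ztil i, x⟫_ℝ • ztil i) := by
    rw [hH, hH, add_sub_add_right_eq_sub, ← Finset.sum_sub_distrib]
    exact Finset.sum_congr rfl fun i _ => (sub_smul _ _ _).symm
  rw [hdiff]
  calc ‖∑ i, (d2ℓ ⟪ztil i, u⟫_ℝ (y i) - d2ℓ ⟪ztil i, v⟫_ℝ (y i)) • (⟪ztil i, x⟫_ℝ • ztil i)‖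
      ≤ ∑ i, ‖(d2ℓ ⟪ztil i, u⟫_ℝ (y i) - d2ℓ ⟪ztil i, v⟫_ℝ (y i)) • (⟪ztil i, x⟫_ℝ • ztil i)‖ :=
        norm_sum_le _ _
    _ ≤ ∑ _i : Fin m, γ₂ * ‖u - v‖ * ‖x‖ := by
        refine Finset.sum_le_sum fun i _ => ?_
        rw [norm_smul, norm_smul]
        set n := ‖ztil i‖ with hn
        have hn0 : 0 ≤ n := norm_nonneg _
        have hn1 : n ≤ 1 := hznorm i
        have hip : |⟪ztil i, x⟫_ℝ| ≤ n * ‖x‖ := abs_real_inner_le_norm _ _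
        have hδ : |d2ℓ ⟪ztil i, u⟫_ℝ (y i) - d2ℓ ⟪ztil i, v⟫_ℝ (y i)| ≤ γ₂ * (n * ‖u - v‖) := by
          refine (hLip _ _ _).trans ?_
          have h3 : ⟪ztil i, u⟫_ℝ - ⟪ztil i, v⟫_ℝ = ⟪ztil i, u - v⟫_ℝ := (inner_sub_right _ _ _).symm
          rw [h3]
          exact mul_le_mul_of_nonneg_left (abs_real_inner_le_norm _ _) hγ₂.le
        rw [Real.norm_eq_abs, Real.norm_eq_abs]
        have hnn : n * n ≤ 1 := mul_le_one₀ hn1 hn0 hn1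
        have e1 : |⟪ztil i, x⟫_ℝ| * n ≤ ‖x‖ := by
          nlinarith [mul_le_mul_of_nonneg_right hip hn0, norm_nonneg x, abs_nonneg (⟪ztil i, x⟫_ℝ)]
        have e2 : |d2ℓ ⟪ztil i, u⟫_ℝ (y i) - d2ℓ ⟪ztil i, v⟫_ℝ (y i)| ≤ γ₂ * ‖u - v‖ := by
          nlinarith [hδ, mul_nonneg hγ₂.le (norm_nonneg (u - v))]
        calc |d2ℓ ⟪ztil i, u⟫_ℝ (y i) - d2ℓ ⟪ztil i, v⟫_ℝ (y i)| * (|⟪ztil i, x⟫_ℝ| * n)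
            ≤ (γ₂ * ‖u - v‖) * ‖x‖ :=
              mul_le_mul e2 e1 (mul_nonneg (abs_nonneg _) hn0) (by positivity)
          _ = γ₂ * ‖u - v‖ * ‖x‖ := by ring
    _ = γ₂ * m * ‖u - v‖ * ‖x‖ := by
        rw [Finset.sum_const, Finset.card_univ, Fintype.card_fin, nsmul_eq_mul]; ring

/-- under convexity of the loss, a `γ₂`-Lipschitz second derivative,
and unit-norm post-removal representations, the post-removal Hessian at `w*` is
invertible and the Newton update satisfies `‖∇L(w̃; z̃)‖ ≤ (γ₂/(λ²m))·‖Δ‖²`. -/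
theorem newton_update_certified_bound
    (F m : ℕ) (hF : 0 < F) (hm : 0 < m) (lam γ₂ : ℝ) (hlam : 0 < lam) (hγ₂ : 0 < γ₂)
    (ℓ dℓ d2ℓ : ℝ → ℝ → ℝ)
    (hd1 : ∀ a y : ℝ, HasDerivAt (fun t => ℓ t y) (dℓ a y) a)
    (hd2 : ∀ a y : ℝ, HasDerivAt (fun t => dℓ t y) (d2ℓ a y) a)
    -- (b) convexity of the loss in its first argument
    (hconv : ∀ yv : ℝ, ConvexOn ℝ Set.univ fun a => ℓ a yv)
    -- (c) `ℓ''` is `γ₂`-Lipschitz in its first argument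
    (hLip : ∀ a b yv : ℝ, |d2ℓ a yv - d2ℓ b yv| ≤ γ₂ * |a - b|)
    (z ztil : Fin m → EuclideanSpace ℝ (Fin F)) (y : Fin m → ℝ)
    -- (d) unit-norm post-removal representations
    (hznorm : ∀ i, ‖ztil i‖ ≤ 1)
    (wstar : EuclideanSpace ℝ (Fin F))
    -- (a) `w*` is a stationary point of the original risk
    (hstat : ∑ i, dℓ ⟪z i, wstar⟫_ℝ (y i) • z i + (lam * m) • wstar = 0)
    -- gradient and Hessian of the post-removal risk
    (G : EuclideanSpace ℝ (Fin F) → EuclideanSpace ℝ (Fin F))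
    (hG : G = fun w => ∑ i, dℓ ⟪ztil i, w⟫_ℝ (y i) • ztil i + (lam * m) • w)
    (H : EuclideanSpace ℝ (Fin F) →
      EuclideanSpace ℝ (Fin F) →L[ℝ] EuclideanSpace ℝ (Fin F))
    (hH : H = fun w => ∑ i, d2ℓ ⟪ztil i, w⟫_ℝ (y i) •
        ((innerSL ℝ (ztil i)).smulRight (ztil i)) +
        (lam * m) • ContinuousLinearMap.id ℝ (EuclideanSpace ℝ (Fin F)))
    -- (e) `w ↦ ∇L(w; z̃)` is continuously differentiable with derivative `H`
    (hGderiv : ∀ w, HasFDerivAt G (H w) w) (hHcont : Continuous H)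
    (Δ : EuclideanSpace ℝ (Fin F))
    (hΔ : Δ = ∑ i, (dℓ ⟪z i, wstar⟫_ℝ (y i) • z i - dℓ ⟪ztil i, wstar⟫_ℝ (y i) • ztil i)) :
    ∃ Hinv : EuclideanSpace ℝ (Fin F) →L[ℝ] EuclideanSpace ℝ (Fin F),
      (∀ x, Hinv (H wstar x) = x) ∧ (∀ x, H wstar (Hinv x) = x) ∧
      ‖G (wstar + Hinv Δ)‖ ≤ γ₂ / (lam ^ 2 * m) * ‖Δ‖ ^ 2 := by
  have hmpos : (0:ℝ) < m := Nat.cast_pos.2 hm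
  have hc : 0 < lam * m := mul_pos hlam hmpos
  -- pointwise formula for H
  have hHapp : ∀ w x, H w x =
      ∑ i, d2ℓ ⟪ztil i, w⟫_ℝ (y i) • (⟪ztil i, x⟫_ℝ • ztil i) + (lam*(m:ℝ)) • x := by
    intro w x
    simp [hH, ContinuousLinearMap.sum_apply]
  -- second derivative nonnegative
  have hmono : ∀ yv : ℝ, Monotone fun a => dℓ a yv := by
    intro yv a b hab
    have h := ConvexOn.monotoneOn_deriv (hconv yv) (fun x _ => (hd1 x yv).differentiableAt)
    have := h (Set.mem_univ a) (Set.mem_univ b) hab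
    rwa [(hd1 a yv).deriv, (hd1 b yv).deriv] at this
  have d2nn : ∀ a yv : ℝ, 0 ≤ d2ℓ a yv := fun a yv =>
    aux_mono_deriv_nonneg (hmono yv) (hd2 a yv)
  -- coercivity of H w
  have hlow : ∀ w x, lam * m * ‖x‖ ≤ ‖H w x‖ := by
    intro w x
    rw [hHapp]
    set v := ∑ i, d2ℓ ⟪ztil i, w⟫_ℝ (y i) • (⟪ztil i, x⟫_ℝ • ztil i) + (lam*(m:ℝ)) • x with hv
    have key : lam * m * ‖x‖^2 ≤ ⟪x, v⟫_ℝ := by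
      rw [hv, inner_add_right, inner_sum, real_inner_smul_right,
        real_inner_self_eq_norm_sq]
      have h1 : ∀ i ∈ Finset.univ, (0:ℝ) ≤ ⟪x, d2ℓ ⟪ztil i, w⟫_ℝ (y i) • (⟪ztil i, x⟫_ℝ • ztil i)⟫_ℝ := by
        intro i _
        rw [real_inner_smul_right, real_inner_smul_right, real_inner_comm x (ztil i)]
        exact mul_nonneg (d2nn _ _) (mul_self_nonneg _)
      nlinarith [Finset.sum_nonneg h1]
    rcases eq_or_ne x 0 with rfl | hx
    · simp
    · have hxp : 0 < ‖x‖ := norm_pos_iff.2 hx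
      have h2 : ⟪x, v⟫_ℝ ≤ ‖x‖ * ‖v‖ := real_inner_le_norm x v
      have h3 := key.trans h2
      nlinarith
  -- invertibility of H wstar
  set T := H wstar with hT
  have hinj : Function.Injective
      (T : EuclideanSpace ℝ (Fin F) →ₗ[ℝ] EuclideanSpace ℝ (Fin F)) := by
    intro a b hab
    have hab' : T (a - b) = 0 := by
      rw [map_sub]; exact sub_eq_zero.2 hab
    have h2 := hlow wstar (a - b)
    rw [← hT, hab', norm_zero] at h2
    have h4 : ‖a - b‖ = 0 := le_antisymm (by nlinarith [norm_nonneg (a-b)]) (norm_nonneg _)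
    exact sub_eq_zero.1 (norm_eq_zero.1 h4)
  have hbij : Function.Bijective
      (T : EuclideanSpace ℝ (Fin F) →ₗ[ℝ] EuclideanSpace ℝ (Fin F)) :=
    ⟨hinj, (LinearMap.injective_iff_surjective).1 hinj⟩
  let e : EuclideanSpace ℝ (Fin F) ≃ₗ[ℝ] EuclideanSpace ℝ (Fin F) :=
    LinearEquiv.ofBijective _ hbij
  set Hinv : EuclideanSpace ℝ (Fin F) →L[ℝ] EuclideanSpace ℝ (Fin F) :=
    LinearMap.toContinuousLinearMap (e.symm : _ →ₗ[ℝ] _) with hHinv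
  have hleft : ∀ x, Hinv (T x) = x := fun x => e.symm_apply_apply x
  have hright : ∀ x, T (Hinv x) = x := fun x => e.apply_symm_apply x
  refine ⟨Hinv, hleft, hright, ?_⟩
  -- the Newton step
  set d := Hinv Δ with hd
  have hTd : T d = Δ := hright Δ
  have hd_le : lam * m * ‖d‖ ≤ ‖Δ‖ := by
    have h := hlow wstar d
    rwa [← hT, hTd] at h
  -- G wstar = -Δ
  have hGw : G wstar = -Δ := by
    have h0 : G wstar + Δ = 0 := by
      simp only [hG, hΔ]
      rw [Finset.sum_sub_distrib]
      calc (∑ i, dℓ ⟪ztil i, wstar⟫_ℝ (y i) • ztil i + (lam * m) • wstar) +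
            ((∑ i, dℓ ⟪z i, wstar⟫_ℝ (y i) • z i) - ∑ i, dℓ ⟪ztil i, wstar⟫_ℝ (y i) • ztil i)
          = ∑ i, dℓ ⟪z i, wstar⟫_ℝ (y i) • z i + (lam * m) • wstar := by abel
        _ = 0 := hstat
    linear_combination (norm := module) h0
  -- mean value estimate
  set g : ℝ → EuclideanSpace ℝ (Fin F) := fun t => G (wstar + t • d) - t • (T d) with hg'
  have hgderiv : ∀ t : ℝ, HasDerivAt g (H (wstar + t • d) d - T d) t := by
    intro t
    have h1 : HasDerivAt (fun t : ℝ => wstar + t • d) d t := by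
      simpa using ((hasDerivAt_id t).smul_const d).const_add wstar
    have h2 := (hGderiv (wstar + t • d)).comp_hasDerivAt t h1
    have h3 : HasDerivAt (fun t : ℝ => t • (T d)) (T d) t := by
      simpa using (hasDerivAt_id t).smul_const (T d)
    exact h2.sub h3
  have hbound : ∀ t ∈ Set.Ico (0:ℝ) 1, ‖H (wstar + t • d) d - T d‖ ≤ γ₂ * m * ‖d‖ * ‖d‖ := by
    intro t ht
    have h := aux_H_lip F m lam γ₂ hγ₂ d2ℓ hLip ztil y hznorm H hHapp (wstar + t • d) wstar d
    have hsub : wstar + t • d - wstar = t • d := by abel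
    rw [hsub] at h
    refine h.trans ?_
    have hts : ‖t • d‖ ≤ ‖d‖ := by
      rw [norm_smul, Real.norm_eq_abs, abs_of_nonneg ht.1]
      nlinarith [norm_nonneg d, ht.2.le]
    have := mul_le_mul_of_nonneg_right
      (mul_le_mul_of_nonneg_left hts (mul_pos hγ₂ hmpos).le) (norm_nonneg d)
    linarith
  have hmvt : ‖g 1 - g 0‖ ≤ γ₂ * m * ‖d‖ * ‖d‖ :=
    norm_image_sub_le_of_norm_deriv_le_segment_01'
      (fun t _ => (hgderiv t).hasDerivWithinAt) hbound
  have hg1 : g 1 = G (wstar + d) - Δ := by simp [hg', hTd]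
  have hg0 : g 0 = -Δ := by simpa [hg'] using hGw
  have hfinal : ‖G (wstar + d)‖ ≤ γ₂ * m * ‖d‖ * ‖d‖ := by
    have : g 1 - g 0 = G (wstar + d) := by rw [hg1, hg0]; abel
    rwa [this] at hmvt
  refine hfinal.trans ?_
  -- arithmetic: γ₂ m ‖d‖² ≤ γ₂/(λ²m) ‖Δ‖² since λm‖d‖ ≤ ‖Δ‖
  rw [div_mul_eq_mul_div, le_div_iff₀ (by positivity)]
  have hdn : 0 ≤ ‖d‖ := norm_nonneg d
  nlinarith [mul_le_mul hd_le hd_le (by positivity) (norm_nonneg Δ), sq_nonneg ‖Δ‖]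
end

section
/- (Deterministic form of the node-feature-unlearning guarantee, conditional on the concentration event.) Let 0 ≤ k ≤ F with F ≥ 1, let Π : ℝ^F → ℝ^F be the orthogonal projection zeroing the last k coordinates, and set z̃_i = Π z_i. Suppose: (a) w* satisfies ∇L(w*; z) = 0; (b) ℓ(·, y) is convex in its first argument; (c) ℓ'' is γ₂-Lipschitz in its first argument; (d) ‖z_i‖ ≤ 1 for all i (hence ‖z̃_i‖ ≤ 1); (e) ‖ℓ'(⟨z_i, w*⟩, y_i)·z_i‖ ≤ c for all i; (f) ‖ Σ_{i=1}^m ℓ'(⟨Π z_i, w*⟩, y_i) · Π z_i ‖ ≤ c₁ √((F − k) m / F); and (g) the map w ↦ ∇L(w; z̃) is continuously differentiable with derivative H_w(z̃). Then the Newton update w̃ = w* + H_{w*}(z̃)^{-1} Δ satisfies ‖∇L(w̃; z̃)‖ ≤ (γ₂ / (λ² m)) · ( 2 m c + c₁ √((F − k) m / F) )². -/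
/-!
The Newton step is exact up to the second-order Taylor remainder:
`G w̃ = G w̃ - G w* - H_{w*}(w̃ - w*)` because `G w* = -Δ` (stationarity of `w*` for the original
data) and `H_{w*}(w̃ - w*) = Δ`. Since `ℓ''` is `γ₂`-Lipschitz and `‖z̃ᵢ‖ ≤ 1`, the Hessian is
`γ₂ m`-Lipschitz, so the remainder is at most `γ₂ m ‖w̃ - w*‖²`. Convexity makes `ℓ'' ≥ 0`, so the
Hessian is `λ m`-coercive; hence it is invertible (Lax–Milgram) with `‖w̃ - w*‖ ≤ ‖Δ‖ / (λ m)`,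
and `‖Δ‖ ≤ m c + c₁ √((F - k) m / F)` by the triangle inequality and the concentration event.
-/

open scoped BigOperators InnerProductSpace

/-- The orthogonal projection of `ℝ^F` that zeroes out the last `k` coordinates. -/
noncomputable def zeroLastProj (F k : ℕ) (v : EuclideanSpace ℝ (Fin F)) :
    EuclideanSpace ℝ (Fin F) :=
  WithLp.toLp 2 (fun j : Fin F => if (j : ℕ) < F - k then v j else 0)

open scoped NNReal
open Set Metric

theorem ConvexOn.nonneg_of_hasDerivAt_of_hasDerivAt {f f' f'' : ℝ → ℝ} (hf : ConvexOn ℝ univ f)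
    (hf' : ∀ x, HasDerivAt f (f' x) x) (hf'' : ∀ x, HasDerivAt f' (f'' x) x) (x : ℝ) :
    0 ≤ f'' x := by
  have hmono : Monotone f' := fun a b hab => by
    simpa only [(hf' _).deriv] using
      hf.monotoneOn_deriv (fun x _ => (hf' x).differentiableAt) (mem_univ a) (mem_univ b) hab
  simpa only [(hf'' x).deriv] using hmono.deriv_nonneg (x := x)

theorem norm_zeroLastProj_le (F k : ℕ) (v : EuclideanSpace ℝ (Fin F)) :
    ‖zeroLastProj F k v‖ ≤ ‖v‖ := by
  rw [EuclideanSpace.norm_eq, EuclideanSpace.norm_eq]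
  gcongr with j
  by_cases h : (j : ℕ) < F - k <;> simp [zeroLastProj, h]

theorem norm_sub_sub_fderiv_apply_le_of_lipschitzWith {E F : Type*} [NormedAddCommGroup E]
    [NormedSpace ℝ E] [NormedAddCommGroup F] [NormedSpace ℝ F] {G : E → F}
    {G' : E → E →L[ℝ] F} {K : ℝ≥0} (hG : ∀ x, HasFDerivAt G (G' x) x) (hG' : LipschitzWith K G')
    (w u : E) : ‖G (w + u) - G w - G' w u‖ ≤ K * ‖u‖ ^ 2 := by
  have hbound : ∀ x ∈ closedBall w ‖u‖, ‖G' x - G' w‖ ≤ K * ‖u‖ := fun x hx => by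
    rw [← dist_eq_norm]
    exact (hG'.dist_le_mul x w).trans (by gcongr; exact hx)
  have := (convex_closedBall w ‖u‖).norm_image_sub_le_of_norm_hasFDerivWithin_le'
    (fun x _ => (hG x).hasFDerivWithinAt) hbound (mem_closedBall_self (norm_nonneg u))
    (by simp : w + u ∈ closedBall w ‖u‖)
  simpa [sq, mul_assoc] using this

section Coercive

variable {E : Type*} [NormedAddCommGroup E] [InnerProductSpace ℝ E] {T : E →L[ℝ] E} {μ : ℝ}

theorem mul_norm_le_norm_apply_of_coercive (hT : ∀ x, μ * ‖x‖ ^ 2 ≤ ⟪T x, x⟫_ℝ) (x : E) :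
    μ * ‖x‖ ≤ ‖T x‖ := by
  rcases (norm_nonneg x).eq_or_lt with hx | hx
  · simp [← hx]
  · refine le_of_mul_le_mul_right ?_ hx
    calc μ * ‖x‖ * ‖x‖ = μ * ‖x‖ ^ 2 := by ring
      _ ≤ ⟪T x, x⟫_ℝ := hT x
      _ ≤ ‖T x‖ * ‖x‖ := real_inner_le_norm _ _

theorem exists_continuousLinearEquiv_of_coercive [CompleteSpace E] (hμ : 0 < μ)
    (hT : ∀ x, μ * ‖x‖ ^ 2 ≤ ⟪T x, x⟫_ℝ) : ∃ e : E ≃L[ℝ] E, ⇑e = T := by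
  have hB : IsCoercive ((innerSL ℝ).comp T) :=
    ⟨μ, hμ, fun x => by simpa [sq, mul_assoc] using hT x⟩
  refine ⟨hB.continuousLinearEquivOfBilin, funext fun x => ext_inner_right ℝ fun v => ?_⟩
  simp

end Coercive

section RiskHessian

variable {ι E : Type*} [Fintype ι] [NormedAddCommGroup E] [InnerProductSpace ℝ E]

noncomputable def riskHessian (d2ℓ : ℝ → ℝ → ℝ) (v : ι → E) (y : ι → ℝ) (μ : ℝ) (w : E) :
    E →L[ℝ] E :=
  ∑ i, d2ℓ ⟪v i, w⟫_ℝ (y i) • (innerSL ℝ (v i)).smulRight (v i) + μ • ContinuousLinearMap.id ℝ E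

variable {d2ℓ : ℝ → ℝ → ℝ} {v : ι → E} {y : ι → ℝ} {μ : ℝ}

theorem riskHessian_apply (w x : E) :
    riskHessian d2ℓ v y μ w x = ∑ i, (d2ℓ ⟪v i, w⟫_ℝ (y i) * ⟪v i, x⟫_ℝ) • v i + μ • x := by
  simp [riskHessian, mul_smul]

theorem riskHessian_coercive (hd2ℓ : ∀ a t, 0 ≤ d2ℓ a t) (w x : E) :
    μ * ‖x‖ ^ 2 ≤ ⟪riskHessian d2ℓ v y μ w x, x⟫_ℝ := by
  have hsum : 0 ≤ ∑ i, d2ℓ ⟪v i, w⟫_ℝ (y i) * ⟪v i, x⟫_ℝ * ⟪v i, x⟫_ℝ :=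
    Finset.sum_nonneg fun i _ => by rw [mul_assoc]; exact mul_nonneg (hd2ℓ _ _) (mul_self_nonneg _)
  rw [riskHessian_apply, inner_add_left, sum_inner]
  simp only [real_inner_smul_left, real_inner_self_eq_norm_sq]
  linarith

theorem lipschitzWith_riskHessian {γ : ℝ} (hLip : ∀ a b t, |d2ℓ a t - d2ℓ b t| ≤ γ * |a - b|)
    (hv : ∀ i, ‖v i‖ ≤ 1) :
    LipschitzWith (γ * Fintype.card ι).toNNReal (riskHessian d2ℓ v y μ) := by
  refine LipschitzWith.of_dist_le' fun x x' => ?_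
  have hsub : riskHessian d2ℓ v y μ x - riskHessian d2ℓ v y μ x' =
      ∑ i, (d2ℓ ⟪v i, x⟫_ℝ (y i) - d2ℓ ⟪v i, x'⟫_ℝ (y i)) • (innerSL ℝ (v i)).smulRight (v i) := by
    simp only [riskHessian, add_sub_add_right_eq_sub, ← Finset.sum_sub_distrib, sub_smul]
  have hterm : ∀ i, ‖(d2ℓ ⟪v i, x⟫_ℝ (y i) - d2ℓ ⟪v i, x'⟫_ℝ (y i)) •
      (innerSL ℝ (v i)).smulRight (v i)‖ ≤ γ * dist x x' := fun i => by
    have hproj : ‖(innerSL ℝ (v i)).smulRight (v i)‖ ≤ 1 := by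
      rw [ContinuousLinearMap.norm_smulRight_apply, innerSL_apply_norm]
      exact mul_le_one₀ (hv i) (norm_nonneg _) (hv i)
    have hinner : |⟪v i, x⟫_ℝ - ⟪v i, x'⟫_ℝ| ≤ dist x x' := by
      rw [← inner_sub_right, dist_eq_norm]
      exact (abs_real_inner_le_norm _ _).trans (mul_le_of_le_one_left (norm_nonneg _) (hv i))
    have hγ : 0 ≤ γ := by simpa using (abs_nonneg _).trans (hLip 1 0 0)
    rw [norm_smul, Real.norm_eq_abs]
    calc _ ≤ γ * |⟪v i, x⟫_ℝ - ⟪v i, x'⟫_ℝ| * 1 :=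
          mul_le_mul (hLip _ _ _) hproj (norm_nonneg _) (by positivity)
      _ ≤ γ * dist x x' := by rw [mul_one]; gcongr
  rw [dist_eq_norm, hsub]
  calc _ ≤ ∑ _i : ι, γ * dist x x' := norm_sum_le_of_le _ fun i _ => hterm i
    _ = γ * Fintype.card ι * dist x x' := by simp; ring

end RiskHessian

theorem node_feature_unlearning_guarantee_general
    (F m k : ℕ) (hm : 0 < m)
    (lam c c₁ γ₂ : ℝ) (hlam : 0 < lam) (hc : 0 < c) (hγ₂ : 0 < γ₂)
    (ℓ dℓ d2ℓ : ℝ → ℝ → ℝ)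
    (hd1 : ∀ a y : ℝ, HasDerivAt (fun t => ℓ t y) (dℓ a y) a)
    (hd2 : ∀ a y : ℝ, HasDerivAt (fun t => dℓ t y) (d2ℓ a y) a)
    -- (b) convexity of the loss in its first argument
    (hconv : ∀ yv : ℝ, ConvexOn ℝ Set.univ fun a => ℓ a yv)
    -- (c) `ℓ''` is `γ₂`-Lipschitz in its first argument
    (hLip : ∀ a b yv : ℝ, |d2ℓ a yv - d2ℓ b yv| ≤ γ₂ * |a - b|)
    (z : Fin m → EuclideanSpace ℝ (Fin F)) (y : Fin m → ℝ)
    -- post-removal representations `z̃ᵢ = Π zᵢ`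
    (ztil : Fin m → EuclideanSpace ℝ (Fin F))
    (hztil : ∀ i, ztil i = zeroLastProj F k (z i))
    -- (d) unit-norm representations
    (hznorm : ∀ i, ‖z i‖ ≤ 1)
    (wstar : EuclideanSpace ℝ (Fin F))
    -- (a) `w*` is a stationary point of the original risk
    (hstat : ∑ i, dℓ ⟪z i, wstar⟫_ℝ (y i) • z i + (lam * m) • wstar = 0)
    -- (e) per-sample gradient bound
    (hgradb : ∀ i, ‖dℓ ⟪z i, wstar⟫_ℝ (y i) • z i‖ ≤ c)
    -- (f) the concentration event
    (hconc : ‖∑ i, dℓ ⟪zeroLastProj F k (z i), wstar⟫_ℝ (y i) • zeroLastProj F k (z i)‖ ≤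
      c₁ * Real.sqrt (((F : ℝ) - k) * m / F))
    -- gradient and Hessian of the post-removal risk
    (G : EuclideanSpace ℝ (Fin F) → EuclideanSpace ℝ (Fin F))
    (hG : G = fun w => ∑ i, dℓ ⟪ztil i, w⟫_ℝ (y i) • ztil i + (lam * m) • w)
    (H : EuclideanSpace ℝ (Fin F) →
      EuclideanSpace ℝ (Fin F) →L[ℝ] EuclideanSpace ℝ (Fin F))
    (hH : H = fun w => ∑ i, d2ℓ ⟪ztil i, w⟫_ℝ (y i) •
        ((innerSL ℝ (ztil i)).smulRight (ztil i)) +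
        (lam * m) • ContinuousLinearMap.id ℝ (EuclideanSpace ℝ (Fin F)))
    -- (g) `w ↦ ∇L(w; z̃)` is continuously differentiable with derivative `H`
    (hGderiv : ∀ w, HasFDerivAt G (H w) w)
    (Δ : EuclideanSpace ℝ (Fin F))
    (hΔ : Δ = ∑ i, (dℓ ⟪z i, wstar⟫_ℝ (y i) • z i - dℓ ⟪ztil i, wstar⟫_ℝ (y i) • ztil i)) :
    ∃ Hinv : EuclideanSpace ℝ (Fin F) →L[ℝ] EuclideanSpace ℝ (Fin F),
      (∀ x, Hinv (H wstar x) = x) ∧ (∀ x, H wstar (Hinv x) = x) ∧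
      ‖G (wstar + Hinv Δ)‖ ≤ γ₂ / (lam ^ 2 * m) *
        (2 * m * c + c₁ * Real.sqrt (((F : ℝ) - k) * m / F)) ^ 2 := by
  change H = riskHessian d2ℓ ztil y (lam * m) at hH
  have hd2nn : ∀ a t, 0 ≤ d2ℓ a t := fun a t =>
    (hconv t).nonneg_of_hasDerivAt_of_hasDerivAt (hd1 · t) (hd2 · t) a
  have hcoer := hH ▸ riskHessian_coercive (v := ztil) (y := y) (μ := lam * m) hd2nn wstar
  obtain ⟨e, he⟩ := exists_continuousLinearEquiv_of_coercive (by positivity) hcoer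
  refine ⟨e.symm.toContinuousLinearMap, fun x => by simp [← he], fun x => by simp [← he], ?_⟩
  set u := e.symm Δ
  have hu : lam * m * ‖u‖ ≤ ‖Δ‖ := by
    simpa [u, ← he] using mul_norm_le_norm_apply_of_coercive hcoer u
  have hGw : G wstar = -Δ := by
    simp only [hG, hΔ, Finset.sum_sub_distrib, neg_sub]
    rw [← sub_eq_zero, ← hstat]
    abel
  have hΔb : ‖Δ‖ ≤ 2 * m * c + c₁ * Real.sqrt (((F : ℝ) - k) * m / F) := by
    rw [hΔ, Finset.sum_sub_distrib]
    refine (norm_sub_le _ _).trans (add_le_add ?_ (by simpa only [hztil] using hconc))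
    calc _ ≤ m * c := by simpa using norm_sum_le_of_le Finset.univ fun i _ => hgradb i
      _ ≤ 2 * m * c := by nlinarith
  have hHLip : LipschitzWith (γ₂ * m).toNNReal H := by
    simpa [hH] using lipschitzWith_riskHessian (v := ztil) (y := y) (μ := lam * m) hLip
      fun i => (hztil i ▸ norm_zeroLastProj_le F k (z i)).trans (hznorm i)
  calc ‖G (wstar + u)‖ = ‖G (wstar + u) - G wstar - H wstar u‖ := by
        simp [u, hGw, ← he]
    _ ≤ γ₂ * m * ‖u‖ ^ 2 := by
        simpa [Real.coe_toNNReal _ (by positivity : 0 ≤ γ₂ * m)] using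
          norm_sub_sub_fderiv_apply_le_of_lipschitzWith hGderiv hHLip wstar u
    _ = γ₂ / (lam ^ 2 * m) * (lam * m * ‖u‖) ^ 2 := by field_simp
    _ ≤ _ := by gcongr; exact hu.trans hΔb

/-- deterministic form of the node-feature-unlearning guarantee,
conditional on the concentration event. -/
theorem node_feature_unlearning_guarantee
    (F m k : ℕ) (hF : 0 < F) (hm : 0 < m) (hk : k ≤ F)
    (lam c c₁ γ₂ : ℝ) (hlam : 0 < lam) (hc : 0 < c) (hc₁ : 0 < c₁) (hγ₂ : 0 < γ₂)
    (ℓ dℓ d2ℓ : ℝ → ℝ → ℝ)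
    (hd1 : ∀ a y : ℝ, HasDerivAt (fun t => ℓ t y) (dℓ a y) a)
    (hd2 : ∀ a y : ℝ, HasDerivAt (fun t => dℓ t y) (d2ℓ a y) a)
    -- (b) convexity of the loss in its first argument
    (hconv : ∀ yv : ℝ, ConvexOn ℝ Set.univ fun a => ℓ a yv)
    -- (c) `ℓ''` is `γ₂`-Lipschitz in its first argument
    (hLip : ∀ a b yv : ℝ, |d2ℓ a yv - d2ℓ b yv| ≤ γ₂ * |a - b|)
    (z : Fin m → EuclideanSpace ℝ (Fin F)) (y : Fin m → ℝ)
    -- post-removal representations `z̃ᵢ = Π zᵢ`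
    (ztil : Fin m → EuclideanSpace ℝ (Fin F))
    (hztil : ∀ i, ztil i = zeroLastProj F k (z i))
    -- (d) unit-norm representations
    (hznorm : ∀ i, ‖z i‖ ≤ 1)
    (wstar : EuclideanSpace ℝ (Fin F))
    -- (a) `w*` is a stationary point of the original risk
    (hstat : ∑ i, dℓ ⟪z i, wstar⟫_ℝ (y i) • z i + (lam * m) • wstar = 0)
    -- (e) per-sample gradient bound
    (hgradb : ∀ i, ‖dℓ ⟪z i, wstar⟫_ℝ (y i) • z i‖ ≤ c)
    -- (f) the concentration event
    (hconc : ‖∑ i, dℓ ⟪zeroLastProj F k (z i), wstar⟫_ℝ (y i) • zeroLastProj F k (z i)‖ ≤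
      c₁ * Real.sqrt (((F : ℝ) - k) * m / F))
    -- gradient and Hessian of the post-removal risk
    (G : EuclideanSpace ℝ (Fin F) → EuclideanSpace ℝ (Fin F))
    (hG : G = fun w => ∑ i, dℓ ⟪ztil i, w⟫_ℝ (y i) • ztil i + (lam * m) • w)
    (H : EuclideanSpace ℝ (Fin F) →
      EuclideanSpace ℝ (Fin F) →L[ℝ] EuclideanSpace ℝ (Fin F))
    (hH : H = fun w => ∑ i, d2ℓ ⟪ztil i, w⟫_ℝ (y i) •
        ((innerSL ℝ (ztil i)).smulRight (ztil i)) +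
        (lam * m) • ContinuousLinearMap.id ℝ (EuclideanSpace ℝ (Fin F)))
    -- (g) `w ↦ ∇L(w; z̃)` is continuously differentiable with derivative `H`
    (hGderiv : ∀ w, HasFDerivAt G (H w) w) (hHcont : Continuous H)
    (Δ : EuclideanSpace ℝ (Fin F))
    (hΔ : Δ = ∑ i, (dℓ ⟪z i, wstar⟫_ℝ (y i) • z i - dℓ ⟪ztil i, wstar⟫_ℝ (y i) • ztil i)) :
    ∃ Hinv : EuclideanSpace ℝ (Fin F) →L[ℝ] EuclideanSpace ℝ (Fin F),
      (∀ x, Hinv (H wstar x) = x) ∧ (∀ x, H wstar (Hinv x) = x) ∧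
      ‖G (wstar + Hinv Δ)‖ ≤ γ₂ / (lam ^ 2 * m) *
        (2 * m * c + c₁ * Real.sqrt (((F : ℝ) - k) * m / F)) ^ 2 :=
  node_feature_unlearning_guarantee_general F m k hm lam c c₁ γ₂ hlam hc hγ₂ ℓ dℓ d2ℓ hd1 hd2 hconv
    hLip z y ztil hztil hznorm wstar hstat hgradb hconc G hG H hH hGderiv Δ hΔ
end

section
/- (Theorem 3, deterministic form.) Let s ∈ {0,1}^N with level sets S₀ = {i : s_i = 0} and S₁ = {i : s_i = 1} both nonempty, let X ∈ ℝ^{N×F} with rows x_i ∈ ℝ^F, let σ > 0, λ > 0, c > 0, and let w* ∈ ℝ^F satisfy ‖w*‖ ≤ c/λ. Define s̄ = ‖(I − (1/N)𝟙𝟙ᵀ) s‖₂, the column means X̄_f = (1/N) Σ_i X_{if}, the correlation vector ρ ∈ ℝ^F by ρ_f = (1 / (s̄ σ √N)) Σ_{i=1}^N (s_i − |S₁|/N)(X_{if} − X̄_f), and the statistical-parity gap Δ_SP^raw = | (1/|S₀|) Σ_{i ∈ S₀} ⟨x_i, w*⟩ − (1/|S₁|) Σ_{j ∈ S₁} ⟨x_j,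 w*⟩ |. Then Δ_SP^raw ≤ ( c N^{3/2} s̄ σ / (|S₀| |S₁| λ) ) · ‖ρ‖₂. -/
open scoped BigOperators InnerProductSpace
open Finset

/-! For a 0/1 attribute `s`, the empirical covariance `∑ᵢ (sᵢ - s̄) • (xᵢ - x̄)` equals
`(|S₀||S₁|/N) • (μ₁ - μ₀)`, where `μₖ` is the mean of the rows in `Sₖ`. Hence `ρ` is a positive
multiple of `μ₁ - μ₀`, the parity gap is `|⟪μ₁ - μ₀, w*⟫|`, and Cauchy–Schwarz together with
`‖w*‖ ≤ c/λ` gives the bound. -/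

section

variable {ι E : Type*}

noncomputable def sampleMean [AddCommGroup E] [Module ℝ E] (S : Finset ι) (X : ι → E) : E :=
  (#S : ℝ)⁻¹ • ∑ i ∈ S, X i

lemma inner_sampleMean_left [NormedAddCommGroup E] [InnerProductSpace ℝ E]
    (S : Finset ι) (X : ι → E) (w : E) :
    ⟪sampleMean S X, w⟫_ℝ = (∑ i ∈ S, ⟪X i, w⟫_ℝ) / #S := by
  rw [sampleMean, real_inner_smul_left, sum_inner, inv_mul_eq_div]

variable [Fintype ι]

lemma sum_smul_sub_of_sum_eq_zero [AddCommGroup E] [Module ℝ E] {a : ι → ℝ}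
    (ha : ∑ i, a i = 0) (X : ι → E) (m : E) :
    ∑ i, a i • (X i - m) = ∑ i, a i • X i := by
  simp only [smul_sub, sum_sub_distrib, ← sum_smul, ha, zero_smul, sub_zero]

lemma sum_eq_sum_filter_zero_add_sum_filter_one {M : Type*} [AddCommMonoid M] {s : ι → ℝ}
    (hs : ∀ i, s i = 0 ∨ s i = 1) (g : ι → M) :
    ∑ i, g i = ∑ i ∈ {i | s i = 0}, g i + ∑ i ∈ {i | s i = 1}, g i := by
  have : (univ.filter fun i => s i = 1) = univ.filter fun i => ¬ s i = 0 := by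
    ext i; rcases hs i with h | h <;> simp [h]
  rw [this, sum_filter_add_sum_filter_not]

lemma sum_eq_card_filter_one {s : ι → ℝ} (hs : ∀ i, s i = 0 ∨ s i = 1) :
    ∑ i, s i = #{i | s i = 1} := by
  rw [sum_eq_sum_filter_zero_add_sum_filter_one hs, sum_eq_zero (by simp), zero_add,
    sum_congr rfl (g := fun _ => (1 : ℝ)) (by simp), sum_const, nsmul_one]

lemma card_filter_zero_add_card_filter_one {s : ι → ℝ} (hs : ∀ i, s i = 0 ∨ s i = 1) :
    (#{i | s i = 0} + #{i | s i = 1} : ℝ) = Fintype.card ι := by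
  simpa using (sum_eq_sum_filter_zero_add_sum_filter_one hs fun _ => (1 : ℝ)).symm

lemma sum_centered_smul_centered_eq_smul_sampleMean_sub [AddCommGroup E] [Module ℝ E] {s : ι → ℝ}
    (hs : ∀ i, s i = 0 ∨ s i = 1) (h₀ : ({i | s i = 0} : Finset ι).Nonempty)
    (h₁ : ({i | s i = 1} : Finset ι).Nonempty) (X : ι → E) :
    ∑ i, (s i - #{i | s i = 1} / Fintype.card ι) • (X i - (Fintype.card ι : ℝ)⁻¹ • ∑ j, X j) =
      (#{i | s i = 0} * #{i | s i = 1} / Fintype.card ι : ℝ) •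
        (sampleMean {i | s i = 1} X - sampleMean {i | s i = 0} X) := by
  set n₀ : ℝ := (#{i | s i = 0} : ℝ)
  set n₁ : ℝ := (#{i | s i = 1} : ℝ)
  have hn₀ : 0 < n₀ := Nat.cast_pos.2 h₀.card_pos
  have hn₁ : 0 < n₁ := Nat.cast_pos.2 h₁.card_pos
  have hN : (Fintype.card ι : ℝ) = n₀ + n₁ := (card_filter_zero_add_card_filter_one hs).symm
  have hcentered : ∑ i, (s i - n₁ / Fintype.card ι) = 0 := by
    rw [sum_sub_distrib, sum_eq_card_filter_one hs, sum_const, card_univ, nsmul_eq_mul, hN]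
    field_simp; ring
  have e₀ : ∑ i ∈ {i | s i = 0}, (s i - n₁ / Fintype.card ι) • X i =
      (-(n₁ / Fintype.card ι)) • ∑ i ∈ {i | s i = 0}, X i := by
    rw [smul_sum]; exact sum_congr rfl fun i hi => by rw [(mem_filter.1 hi).2, zero_sub]
  have e₁ : ∑ i ∈ {i | s i = 1}, (s i - n₁ / Fintype.card ι) • X i =
      (1 - n₁ / Fintype.card ι) • ∑ i ∈ {i | s i = 1}, X i := by
    rw [smul_sum]; exact sum_congr rfl fun i hi => by rw [(mem_filter.1 hi).2]
  rw [sum_smul_sub_of_sum_eq_zero hcentered, sum_eq_sum_filter_zero_add_sum_filter_one hs, e₀, e₁,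
    sampleMean, sampleMean, hN]
  match_scalars <;> field_simp <;> ring

lemma norm_pos_of_forall_eq_sub_const {v : EuclideanSpace ℝ ι} {s : ι → ℝ} {m : ℝ}
    (hv : ∀ k, v k = s k - m) {i j : ι} (hij : s i ≠ s j) : 0 < ‖v‖ := by
  refine norm_pos_iff.2 fun h => hij ?_
  have hi := hv i
  have hj := hv j
  simp only [h, PiLp.zero_apply] at hi hj
  linarith

end

theorem statistical_parity_correlation_bound_general
    (N F : ℕ)
    (s : Fin N → ℝ) (hs : ∀ i, s i = 0 ∨ s i = 1)
    (S₀ S₁ : Finset (Fin N))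
    (hS₀ : S₀ = Finset.univ.filter fun i => s i = 0)
    (hS₁ : S₁ = Finset.univ.filter fun i => s i = 1)
    (hS₀ne : S₀.Nonempty) (hS₁ne : S₁.Nonempty)
    (X : Fin N → EuclideanSpace ℝ (Fin F))
    (σ lam c : ℝ) (hσ : 0 < σ)
    (wstar : EuclideanSpace ℝ (Fin F)) (hw : ‖wstar‖ ≤ c / lam)
    -- `s̄ = ‖(I − (1/N)𝟙𝟙ᵀ)s‖₂`, the norm of the centered sensitive attribute
    (scent : EuclideanSpace ℝ (Fin N))
    (hscent : ∀ i, scent i = s i - (1 / (N : ℝ)) * ∑ j, s j)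
    (sbar : ℝ) (hsbar : sbar = ‖scent‖)
    -- the correlation vector `ρ`
    (ρ : EuclideanSpace ℝ (Fin F))
    (hρ : ∀ f, ρ f = (1 / (sbar * σ * Real.sqrt N)) *
      ∑ i, (s i - (S₁.card : ℝ) / N) * (X i f - (∑ j, X j f) / N))
    -- the statistical-parity gap of the raw predictions
    (ΔSP : ℝ)
    (hΔSP : ΔSP = |(∑ i ∈ S₀, ⟪X i, wstar⟫_ℝ) / S₀.card -
      (∑ j ∈ S₁, ⟪X j, wstar⟫_ℝ) / S₁.card|) :
    ΔSP ≤ c * (N : ℝ) ^ ((3 : ℝ) / 2) * sbar * σ / (S₀.card * S₁.card * lam) * ‖ρ‖ := by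
  subst hS₀ hS₁
  set μ₀ := sampleMean {i | s i = 0} X
  set μ₁ := sampleMean {i | s i = 1} X
  have hn₀ : (0 : ℝ) < #{i | s i = 0} := Nat.cast_pos.2 hS₀ne.card_pos
  have hn₁ : (0 : ℝ) < #{i | s i = 1} := Nat.cast_pos.2 hS₁ne.card_pos
  obtain ⟨i, hi⟩ := hS₀ne
  obtain ⟨j, hj⟩ := hS₁ne
  have hsbar_pos : 0 < sbar := hsbar ▸ norm_pos_of_forall_eq_sub_const hscent
    (by rw [(mem_filter.1 hi).2, (mem_filter.1 hj).2]; norm_num : s i ≠ s j)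
  have hN : (0 : ℝ) < N := by exact_mod_cast Fin.pos i
  set κ : ℝ := (#{i | s i = 0} * #{i | s i = 1} / N : ℝ) / (sbar * σ * √N) with hκ
  have hκ_pos : 0 < κ := by positivity
  have hρμ : ρ = κ • (μ₁ - μ₀) := by
    have hcov := sum_centered_smul_centered_eq_smul_sampleMean_sub hs ⟨i, hi⟩ ⟨j, hj⟩ X
    simp only [Fintype.card_fin] at hcov
    rw [hκ, div_eq_inv_mul, mul_smul, ← hcov]
    ext f
    simp [hρ f, div_eq_inv_mul]
  have hpow : (N : ℝ) ^ ((3 : ℝ) / 2) = N * √N := by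
    rw [Real.sqrt_eq_rpow, ← Real.rpow_one_add' hN.le (by norm_num)]
    norm_num
  calc ΔSP = |⟪μ₁ - μ₀, wstar⟫_ℝ| := by
        rw [hΔSP, inner_sub_left, inner_sampleMean_left, inner_sampleMean_left, abs_sub_comm]
    _ ≤ ‖μ₁ - μ₀‖ * (c / lam) := (abs_real_inner_le_norm _ _).trans (by gcongr)
    _ = _ := by
        rw [hρμ, norm_smul, Real.norm_of_nonneg hκ_pos.le, hκ, hpow]
        field_simp

/-- Theorem 3, deterministic form: the statistical-parity gap of
the linear predictor `w*` with `‖w*‖ ≤ c/λ` is bounded by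
`c N^{3/2} s̄ σ / (|S₀||S₁| λ) · ‖ρ‖₂`. -/
theorem statistical_parity_correlation_bound
    (N F : ℕ) (hN : 0 < N) (hF : 0 < F)
    (s : Fin N → ℝ) (hs : ∀ i, s i = 0 ∨ s i = 1)
    (S₀ S₁ : Finset (Fin N))
    (hS₀ : S₀ = Finset.univ.filter fun i => s i = 0)
    (hS₁ : S₁ = Finset.univ.filter fun i => s i = 1)
    (hS₀ne : S₀.Nonempty) (hS₁ne : S₁.Nonempty)
    (X : Fin N → EuclideanSpace ℝ (Fin F))
    (σ lam c : ℝ) (hσ : 0 < σ) (hlam : 0 < lam) (hc : 0 < c)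
    (wstar : EuclideanSpace ℝ (Fin F)) (hw : ‖wstar‖ ≤ c / lam)
    -- `s̄ = ‖(I − (1/N)𝟙𝟙ᵀ)s‖₂`, the norm of the centered sensitive attribute
    (scent : EuclideanSpace ℝ (Fin N))
    (hscent : ∀ i, scent i = s i - (1 / (N : ℝ)) * ∑ j, s j)
    (sbar : ℝ) (hsbar : sbar = ‖scent‖)
    -- the correlation vector `ρ`
    (ρ : EuclideanSpace ℝ (Fin F))
    (hρ : ∀ f, ρ f = (1 / (sbar * σ * Real.sqrt N)) *
      ∑ i, (s i - (S₁.card : ℝ) / N) * (X i f - (∑ j, X j f) / N))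
    -- the statistical-parity gap of the raw predictions
    (ΔSP : ℝ)
    (hΔSP : ΔSP = |(∑ i ∈ S₀, ⟪X i, wstar⟫_ℝ) / S₀.card -
      (∑ j ∈ S₁, ⟪X j, wstar⟫_ℝ) / S₁.card|) :
    ΔSP ≤ c * (N : ℝ) ^ ((3 : ℝ) / 2) * sbar * σ / (S₀.card * S₁.card * lam) * ‖ρ‖ :=
  statistical_parity_correlation_bound_general N F s hs S₀ S₁ hS₀ hS₁ hS₀ne hS₁ne X σ lam c hσ wstar
    hw scent hscent sbar hsbar ρ hρ ΔSP hΔSP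
end
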